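/- arXiv:0806.1803 — 4 statements merged into one kernel-verified Lean document; each statement's English description precedes it below -/
import Mathlib

section
/- For any parameters β₃,...,βₙ,γ in ℂ, the (n+1)-dimensional algebra L(β₃,...,βₙ,γ) with basis e₀,...,eₙ and nonzero products [e₀,e₀]=e₂, [eᵢ,e₀]=e_{i+1} for 2≤i≤n-1, [e₀,e₁]=β₃e₃+...+βₙeₙ, [e₁,e₁]=γeₙ, [e_j,e₁]=β₃e_{j+2}+...+β_{n+1-j}eₙ for 2≤j≤n-2, satisfies the Leibniz identity [x,[y,z]] = [[x,y],z] - [[x,z],y]. (Take n = 4, so dimension 5, for concreteness.) -/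
/-- The bracket of the algebra `L(β₃, β₄, γ)` from `SLeib₅` (case n = 4). -/
def brS5 (b3 b4 g : ℂ) (x y : Fin 5 → ℂ) : Fin 5 → ℂ :=
  ![0, 0,
    x 0 * y 0,
    x 2 * y 0 + b3 * (x 0 * y 1),
    x 3 * y 0 + b4 * (x 0 * y 1) + g * (x 1 * y 1) + b3 * (x 2 * y 1)]

/-- For any parameters `β₃, β₄, γ ∈ ℂ`, the algebra `L(β₃,β₄,γ)` satisfies the
Leibniz identity. -/
theorem SLeib5_satisfies_leibniz (b3 b4 g : ℂ) :
    ∀ x y z : Fin 5 → ℂ,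
      brS5 b3 b4 g x (brS5 b3 b4 g y z) =
        brS5 b3 b4 g (brS5 b3 b4 g x y) z - brS5 b3 b4 g (brS5 b3 b4 g x z) y := by
  intro x y z
  ext i
  fin_cases i <;> simp only [brS5, Pi.sub_apply, Fin.reduceFinMk, Matrix.cons_val] <;> ring
end

section
/- Suppose β₃ ≠ 0 and γ - 2β₃² ≠ 0. Then there exist A,B,D ∈ ℂ with AD ≠ 0 such that under the transformation β₃' = (D/A²)β₃, β₄' = (D/A³)(β₄ + B(γ - 2β₃²)/A), γ' = (D²/A⁴)γ, one gets β₃' = 1, β₄' = 0, γ' = γ/β₃². Hence every algebra in U₁ ⊂ SLeib₅ is isomorphic to L(1,0,λ) with λ = γ/β₃². -/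
/-- Every algebra of `U₁ ⊂ SLeib₅` (i.e. `β₃ ≠ 0`, `γ - 2β₃² ≠ 0`) can be
brought by an adapted transformation to the form `L(1,0,λ)` with
`λ = γ/β₃²`. -/
theorem U1_normal_form_SLeib5 (b3 b4 g : ℂ) (hb3 : b3 ≠ 0)
    (hg : g - 2 * b3 ^ 2 ≠ 0) :
    ∃ A B D : ℂ, A * D ≠ 0 ∧
      D / A ^ 2 * b3 = 1 ∧
      D / A ^ 3 * (b4 + B * (g - 2 * b3 ^ 2) / A) = 0 ∧
      D ^ 2 / A ^ 4 * g = g / b3 ^ 2 := by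
  -- `D = β₃⁻¹` normalises `β₃`, and the shift `B` (available since `γ ≠ 2β₃²`) cancels `β₄`.
  refine ⟨1, -b4 / (g - 2 * b3 ^ 2), b3⁻¹, ?_, ?_, ?_, ?_⟩
  · simpa using hb3
  · simp [hb3]
  · rw [div_mul_cancel₀ _ hg]
    ring
  · field_simp
end

section
/- The quantity (2β₃β₄γ + β₃²(4β₃β₅ - 5β₄²))/γ² is invariant under the dimension-6 adapted transformations on U₁ = {β₃ ≠ 0, γ ≠ 0}: if β₃' = (D/A²)β₃, β₄' = (D/A³)(β₄ - 2(B/A)β₃²), β₅' = (D/A⁴)(β₅ + (B/A)(γ - 5β₄β₃ + ... )) and γ' = (D²/A⁵)γ satisfy the stated transformation laws of SLeib₆, then (2β₃'β₄'γ' + β₃'²Λ₁')/γ'² = (2β₃β₄γ + β₃²Λ₁)/γ², where Λ₁ = 4β₃β₅ - 5β₄². -/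
/-!
The transformation is a translation by `s = B/A` followed by a weighted scaling. The numerator
`2β₃β₄γ + β₃²Λ₁` is unchanged by the translation, and under the scaling it picks up the factor
`(D²/A⁵)²`, exactly as `γ²` does; so the quotient is invariant as soon as `D²/A⁵ ≠ 0`.
-/

variable {K : Type*} [Field K]

def u1Numerator (b3 b4 b5 g : K) : K :=
  2 * b3 * b4 * g + b3 ^ 2 * (4 * b3 * b5 - 5 * b4 ^ 2)

theorem u1Numerator_translate (s b3 b4 b5 g : K) :
    u1Numerator b3 (b4 - 2 * s * b3 ^ 2) (s * g + b5 - 5 * s * b3 * b4 + 5 * s ^ 2 * b3 ^ 3) g =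
      u1Numerator b3 b4 b5 g := by
  unfold u1Numerator
  ring

theorem u1Numerator_scale (a d b3 b4 b5 g : K) :
    u1Numerator (d / a ^ 2 * b3) (d / a ^ 3 * b4) (d / a ^ 4 * b5) (d ^ 2 / a ^ 5 * g) =
      (d ^ 2 / a ^ 5) ^ 2 * u1Numerator b3 b4 b5 g := by
  unfold u1Numerator
  ring

theorem U1_invariant_SLeib6_general (A B D b3 b4 b5 g b3' b4' b5' g' : ℂ)
    (hAD : A * D ≠ 0)
    (h3 : b3' = D / A ^ 2 * b3)
    (h4 : b4' = D / A ^ 3 * (b4 - 2 * (B / A) * b3 ^ 2))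
    (h5 : b5' = D / A ^ 4 *
      (B / A * g + b5 - 5 * (B / A) * b3 * b4 + 5 * (B / A) ^ 2 * b3 ^ 3))
    (h6 : g' = D ^ 2 / A ^ 5 * g) :
    (2 * b3' * b4' * g' + b3' ^ 2 * (4 * b3' * b5' - 5 * b4' ^ 2)) / g' ^ 2 =
      (2 * b3 * b4 * g + b3 ^ 2 * (4 * b3 * b5 - 5 * b4 ^ 2)) / g ^ 2 := by
  obtain ⟨hA, hD⟩ := mul_ne_zero_iff.mp hAD
  have hc : D ^ 2 / A ^ 5 ≠ 0 := div_ne_zero (pow_ne_zero _ hD) (pow_ne_zero _ hA)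
  change u1Numerator b3' b4' b5' g' / g' ^ 2 = u1Numerator b3 b4 b5 g / g ^ 2
  rw [h3, h4, h5, h6, u1Numerator_scale, u1Numerator_translate, mul_pow,
    mul_div_mul_left _ _ (pow_ne_zero 2 hc)]

/-- `(2β₃β₄γ + β₃²Λ₁)/γ²` with `Λ₁ = 4β₃β₅ - 5β₄²` is invariant under the
adapted transformations of `SLeib₆` on `U₁ = {β₃ ≠ 0, γ ≠ 0}`. -/
theorem U1_invariant_SLeib6 (A B D b3 b4 b5 g b3' b4' b5' g' : ℂ)
    (hAD : A * D ≠ 0) (hb3 : b3 ≠ 0) (hg : g ≠ 0)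
    (h3 : b3' = D / A ^ 2 * b3)
    (h4 : b4' = D / A ^ 3 * (b4 - 2 * (B / A) * b3 ^ 2))
    (h5 : b5' = D / A ^ 4 *
      (B / A * g + b5 - 5 * (B / A) * b3 * b4 + 5 * (B / A) ^ 2 * b3 ^ 3))
    (h6 : g' = D ^ 2 / A ^ 5 * g) :
    (2 * b3' * b4' * g' + b3' ^ 2 * (4 * b3' * b5' - 5 * b4' ^ 2)) / g' ^ 2 =
      (2 * b3 * b4 * g + b3 ^ 2 * (4 * b3 * b5 - 5 * b4 ^ 2)) / g ^ 2 :=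
  U1_invariant_SLeib6_general A B D b3 b4 b5 g b3' b4' b5' g' hAD h3 h4 h5 h6
end

section
/- For 0 ≤ λ ≠ λ' (distinct complex numbers), the 6-dimensional Leibniz algebras L(1,0,λ,1) and L(1,0,λ',1) are non-isomorphic, where L(1,0,λ,1) has basis e₀,...,e₅ with nonzero products [e₀,e₀]=e₂, [eᵢ,e₀]=e_{i+1} for 2≤i≤4, [e₀,e₁]=e₃+λe₅, [e₁,e₁]=e₅, [e₂,e₁]=e₄, [e₃,e₁]=e₅. -/
/-- The bracket of the algebra `L(1,0,λ,1)` in `SLeib₆`. -/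
def brL101 (l : ℂ) (x y : Fin 6 → ℂ) : Fin 6 → ℂ :=
  ![0, 0,
    x 0 * y 0,
    x 2 * y 0 + x 0 * y 1,
    x 3 * y 0 + x 2 * y 1,
    x 4 * y 0 + l * (x 0 * y 1) + x 1 * y 1 + x 3 * y 1]

/-!
An isomorphism `L(1,0,λ,1) → L(1,0,λ',1)` is pinned down by the images `a`, `b` of the
generators `e₀`, `e₁`, which must satisfy the defining relations of `L(1,0,λ,1)` inside
`L(1,0,λ',1)`. Since `[[a,a],a]` and `[b,b]`, the images of `e₃` and `e₅`, are nonzero, `a₀ ≠ 0`,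
hence `[b,a] = 0` gives `b₀ = b₂ = b₃ = 0`, and then `b₁ ≠ 0`. Computing `e₄ = [e₂,e₁] = [e₃,e₀]`
and `e₅ = [e₃,e₁] = [e₁,e₁]` in two ways gives `b₁ = a₀² = a₀³`, so `a₀ = b₁ = 1`, and the
`e₅`-coordinate of `e₄` then forces `a₁ = 0`. Finally the `e₅`-coordinate of
`[e₀,e₁] = e₃ + λ e₅` reads `a₃ + λ = λ' + a₃`.
-/

namespace L101

variable {μ : ℂ} {x y : Fin 6 → ℂ}

local notation "⟦" x ", " y "⟧" => brL101 μ x y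

@[simp] lemma brL101_apply_zero : ⟦x, y⟧ 0 = 0 := rfl
@[simp] lemma brL101_apply_one : ⟦x, y⟧ 1 = 0 := rfl
@[simp] lemma brL101_apply_two : ⟦x, y⟧ 2 = x 0 * y 0 := rfl
@[simp] lemma brL101_apply_three : ⟦x, y⟧ 3 = x 2 * y 0 + x 0 * y 1 := rfl
@[simp] lemma brL101_apply_four : ⟦x, y⟧ 4 = x 3 * y 0 + x 2 * y 1 := rfl
@[simp] lemma brL101_apply_five :
    ⟦x, y⟧ 5 = x 4 * y 0 + μ * (x 0 * y 1) + x 1 * y 1 + x 3 * y 1 := rfl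

lemma brL101_eq_zero_of_apply_zero_one (h0 : y 0 = 0) (h1 : y 1 = 0) : ⟦x, y⟧ = 0 := by
  ext i; fin_cases i <;> simp [h0, h1]

lemma brL101_brL101_self_eq_zero (h0 : x 0 = 0) : ⟦⟦x, x⟧, x⟧ = 0 := by
  ext i; fin_cases i <;> simp [h0]

lemma brL101_single_zero_single_zero : ⟦Pi.single 0 1, Pi.single 0 1⟧ = Pi.single 2 1 := by
  ext i; fin_cases i <;> simp
lemma brL101_single_two_single_zero : ⟦Pi.single 2 1, Pi.single 0 1⟧ = Pi.single 3 1 := by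
  ext i; fin_cases i <;> simp
lemma brL101_single_three_single_zero : ⟦Pi.single 3 1, Pi.single 0 1⟧ = Pi.single 4 1 := by
  ext i; fin_cases i <;> simp
lemma brL101_single_one_single_zero : ⟦Pi.single 1 1, Pi.single 0 1⟧ = 0 := by
  ext i; fin_cases i <;> simp
lemma brL101_single_zero_single_one :
    ⟦Pi.single 0 1, Pi.single 1 1⟧ = Pi.single 3 1 + μ • Pi.single 5 1 := by
  ext i; fin_cases i <;> simp
lemma brL101_single_one_single_one : ⟦Pi.single 1 1, Pi.single 1 1⟧ = Pi.single 5 1 := by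
  ext i; fin_cases i <;> simp
lemma brL101_single_two_single_one : ⟦Pi.single 2 1, Pi.single 1 1⟧ = Pi.single 4 1 := by
  ext i; fin_cases i <;> simp
lemma brL101_single_three_single_one : ⟦Pi.single 3 1, Pi.single 1 1⟧ = Pi.single 5 1 := by
  ext i; fin_cases i <;> simp

variable {a b : Fin 6 → ℂ}

lemma apply_eq_zero_of_brL101_eq_zero (ha : a 0 ≠ 0) (hba : ⟦b, a⟧ = 0) :
    b 0 = 0 ∧ b 2 = 0 ∧ b 3 = 0 := by
  have h2 := congrFun hba 2
  have h3 := congrFun hba 3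
  have h4 := congrFun hba 4
  simp only [brL101_apply_two, brL101_apply_three, brL101_apply_four, Pi.zero_apply]
    at h2 h3 h4
  have hb0 : b 0 = 0 := (mul_eq_zero.mp h2).resolve_right ha
  have hb2 : b 2 = 0 := by simpa [hb0, ha] using h3
  have hb3 : b 3 = 0 := by simpa [hb2, ha] using h4
  exact ⟨hb0, hb2, hb3⟩

theorem eq_of_brL101_relations {l : ℂ}
    (haaa : ⟦⟦a, a⟧, a⟧ ≠ 0) (hbb : ⟦b, b⟧ ≠ 0) (hba : ⟦b, a⟧ = 0)
    (he4 : ⟦⟦a, a⟧, b⟧ = ⟦⟦⟦a, a⟧, a⟧, a⟧) (he5 : ⟦⟦⟦a, a⟧, a⟧, b⟧ = ⟦b, b⟧)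
    (hab : ⟦⟦a, a⟧, a⟧ + l • ⟦b, b⟧ = ⟦a, b⟧) : l = μ := by
  have ha0 : a 0 ≠ 0 := fun h ↦ haaa (brL101_brL101_self_eq_zero h)
  obtain ⟨hb0, -, hb3⟩ := apply_eq_zero_of_brL101_eq_zero ha0 hba
  have hb1 : b 1 ≠ 0 := fun h ↦ hbb (brL101_eq_zero_of_apply_zero_one hb0 h)
  have e44 := congrFun he4 4
  have e45 := congrFun he4 5
  have e55 := congrFun he5 5
  have eab := congrFun hab 5
  simp only [brL101_apply_zero, brL101_apply_one, brL101_apply_two, brL101_apply_three,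
    brL101_apply_four, brL101_apply_five, Pi.add_apply, Pi.smul_apply, smul_eq_mul, hb0, hb3]
    at e44 e45 e55 eab
  have hb1_sq : b 1 = a 0 ^ 2 :=
    mul_left_cancel₀ (pow_ne_zero 2 ha0) (by linear_combination e44)
  have hb1_cube : b 1 = a 0 ^ 3 := mul_left_cancel₀ hb1 (by linear_combination -e55)
  have ha0_one : a 0 = 1 :=
    mul_left_cancel₀ (pow_ne_zero 2 ha0) (by linear_combination hb1_sq - hb1_cube)
  have hb1_one : b 1 = 1 := by rw [hb1_sq, ha0_one, one_pow]
  have ha1 : a 1 = 0 := by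
    rw [ha0_one, hb1_one] at e45
    linear_combination -e45 / 2
  rw [ha0_one, hb1_one, ha1] at eab
  linear_combination eab

end L101

open L101 in
/-- For `λ ≠ λ'`, the 6-dimensional algebras `L(1,0,λ,1)` and `L(1,0,λ',1)`
are not isomorphic. -/
theorem L101lambda_not_isomorphic (l l' : ℂ) (h : l ≠ l') :
    ¬ ∃ f : (Fin 6 → ℂ) ≃ₗ[ℂ] (Fin 6 → ℂ),
        ∀ x y : Fin 6 → ℂ, f (brL101 l x y) = brL101 l' (f x) (f y) := by
  rintro ⟨f, hf⟩
  set a := f (Pi.single 0 1)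
  set b := f (Pi.single 1 1)
  have hf2 : f (Pi.single 2 1) = brL101 l' a a := by
    rw [← brL101_single_zero_single_zero (μ := l), hf]
  have hf3 : f (Pi.single 3 1) = brL101 l' (brL101 l' a a) a := by
    rw [← brL101_single_two_single_zero (μ := l), hf, hf2]
  have hf4 : f (Pi.single 4 1) = brL101 l' (brL101 l' (brL101 l' a a) a) a := by
    rw [← brL101_single_three_single_zero (μ := l), hf, hf3]
  have hf5 : f (Pi.single 5 1) = brL101 l' b b := by
    rw [← brL101_single_one_single_one (μ := l), hf]
  have hsingle (i : Fin 6) : f (Pi.single i 1) ≠ 0 := f.map_ne_zero_iff.2 (by simp)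
  refine h (eq_of_brL101_relations (a := a) (b := b) ?_ ?_ ?_ ?_ ?_ ?_)
  · exact hf3 ▸ hsingle 3
  · exact hf5 ▸ hsingle 5
  · rw [← hf, brL101_single_one_single_zero, map_zero]
  · rw [← hf4, ← brL101_single_two_single_one (μ := l), hf, hf2]
  · rw [← hf5, ← brL101_single_three_single_one (μ := l), hf, hf3]
  · rw [← hf3, ← hf5, ← map_smul, ← map_add, ← brL101_single_zero_single_one, hf]
end
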